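/- Let X_1,...,X_m be 0/1 random variables satisfying the downward condition: for every J, Pr[∀j∈J, X_j=0] ≤ Π_{j∈J}(1−p_j) where p_i = Pr[X_i=1]. Let X = Σ X_i, μ = Σ p_i. Then for all a with 0 < a ≤ μ: Pr[X ≤ a] ≤ ((m−μ)/(m−a))^{m−a} · (μ/a)^a. -/

import Mathlib

open MeasureTheory ProbabilityTheory Finset

/-!
For `0 < s ≤ 1`, Markov's inequality applied to `s ^ X` gives `Pr[X ≤ a] ≤ s ^ (-a) * E[s ^ X]`.
For 0/1 variables `s ^ X = ∏ i, (1 - (1 - s) X_i)`; expanding this product in the monomials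
`∏ j ∈ J, (1 - X_j)`, whose expectations are `Pr[∀ j ∈ J, X_j = 0]`, the downward condition gives
`E[s ^ X] ≤ ∏ i, (1 - (1 - s) p_i)`, and by AM-GM this is at most `(1 - (1 - s) μ / m) ^ m`.
The choice `s = a (m - μ) / (μ (m - a))` turns this into the stated bound. When `μ = m` every
`X_i` is almost surely `1`, and the bound is checked directly.
-/

namespace Real

theorem prod_le_arith_mean_pow {ι : Type*} (s : Finset ι) (z : ι → ℝ) (hz : ∀ i ∈ s, 0 ≤ z i) :
    ∏ i ∈ s, z i ≤ ((∑ i ∈ s, z i) / #s) ^ #s := by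
  rcases s.eq_empty_or_nonempty with rfl | hs
  · simp
  have hn : (0 : ℝ) < #s := by exact_mod_cast hs.card_pos
  have amgm := geom_mean_le_arith_mean_weighted s (fun _ => (#s : ℝ)⁻¹) z
    (fun _ _ => by positivity) (by simp [hn.ne']) hz
  calc ∏ i ∈ s, z i = (∏ i ∈ s, z i ^ (#s : ℝ)⁻¹) ^ #s := by
        rw [← prod_pow]
        refine prod_congr rfl fun i hi => ?_
        rw [← rpow_natCast, ← rpow_mul (hz i hi), inv_mul_cancel₀ hn.ne', rpow_one]
    _ ≤ (∑ i ∈ s, (#s : ℝ)⁻¹ * z i) ^ #s :=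
        pow_le_pow_left₀ (prod_nonneg fun i hi => rpow_nonneg (hz i hi) _) amgm _
    _ = ((∑ i ∈ s, z i) / #s) ^ #s := by rw [← mul_sum, inv_mul_eq_div]

theorem rpow_sum_eq_prod_one_sub_mul {ι : Type*} {s : ℝ} (hs : 0 < s) (J : Finset ι) {x : ι → ℝ}
    (hx : ∀ i ∈ J, x i = 0 ∨ x i = 1) :
    s ^ (∑ i ∈ J, x i) = ∏ i ∈ J, (1 - (1 - s) * x i) := by
  rw [rpow_sum_of_pos hs]
  refine prod_congr rfl fun i hi => ?_
  rcases hx i hi with h | h <;> simp [h]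

end Real

theorem Finset.prod_one_sub_mul_eq_sum_powerset {ι R : Type*} [DecidableEq ι] [CommRing R]
    (s : Finset ι) (t : R) (q : ι → R) :
    ∏ i ∈ s, (1 - t * q i) =
      ∑ J ∈ s.powerset, t ^ #J * (1 - t) ^ #(s \ J) * ∏ j ∈ J, (1 - q j) := by
  have hsplit : ∀ i, 1 - t * q i = t * (1 - q i) + (1 - t) := fun i => by ring
  simp_rw [hsplit, prod_add, prod_mul_distrib, prod_const]
  exact sum_congr rfl fun J _ => by ring

section

variable {Ω ι : Type*} {X : ι → Ω → ℝ}

theorem prod_one_sub_eq_indicator (hX01 : ∀ i ω, X i ω = 0 ∨ X i ω = 1) (J : Finset ι) :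
    (fun ω => ∏ j ∈ J, (1 - X j ω)) = {ω | ∀ j ∈ J, X j ω = 0}.indicator 1 := by
  funext ω
  by_cases hω : ω ∈ {ω | ∀ j ∈ J, X j ω = 0}
  · rw [Set.indicator_of_mem hω]
    exact prod_eq_one fun j hj => by simp [hω j hj]
  · rw [Set.indicator_of_notMem hω]
    simp only [Set.mem_ofPred_eq, not_forall] at hω
    obtain ⟨j, hj, hj0⟩ := hω
    exact prod_eq_zero hj (by rw [(hX01 j ω).resolve_left hj0, sub_self])

variable [MeasurableSpace Ω] {μ : Measure Ω} {p : ι → ℝ}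

def DownwardCorrelated (μ : Measure Ω) (X : ι → Ω → ℝ) (p : ι → ℝ) : Prop :=
  ∀ J : Finset ι, μ.real {ω | ∀ j ∈ J, X j ω = 0} ≤ ∏ j ∈ J, (1 - p j)

theorem measurableSet_forall_eq_zero (hXm : ∀ i, Measurable (X i)) (J : Finset ι) :
    MeasurableSet {ω | ∀ j ∈ J, X j ω = 0} := by
  have hJ : {ω | ∀ j ∈ J, X j ω = 0} = ⋂ j ∈ J, X j ⁻¹' {0} := by ext; simp
  exact hJ ▸ J.measurableSet_biInter fun j _ => hXm j (measurableSet_singleton 0)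

theorem integrable_prod_one_sub [IsFiniteMeasure μ] (hX01 : ∀ i ω, X i ω = 0 ∨ X i ω = 1)
    (hXm : ∀ i, Measurable (X i)) (J : Finset ι) :
    Integrable (fun ω => ∏ j ∈ J, (1 - X j ω)) μ := by
  rw [prod_one_sub_eq_indicator hX01 J]
  exact (integrable_const 1).indicator (measurableSet_forall_eq_zero hXm J)

theorem integral_prod_one_sub (hX01 : ∀ i ω, X i ω = 0 ∨ X i ω = 1)
    (hXm : ∀ i, Measurable (X i)) (J : Finset ι) :
    ∫ ω, ∏ j ∈ J, (1 - X j ω) ∂μ = μ.real {ω | ∀ j ∈ J, X j ω = 0} := by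
  rw [prod_one_sub_eq_indicator hX01 J]
  exact integral_indicator_one (measurableSet_forall_eq_zero hXm J)

namespace DownwardCorrelated

theorem le_one (h : DownwardCorrelated μ X p) (i : ι) : p i ≤ 1 := by
  have hi := h {i}
  simp only [mem_singleton, forall_eq, prod_singleton] at hi
  linarith [measureReal_nonneg (μ := μ) (s := {ω | X i ω = 0})]

theorem sum_le_card [Fintype ι] (h : DownwardCorrelated μ X p) :
    ∑ i, p i ≤ Fintype.card ι := by
  simpa using sum_le_card_nsmul univ p 1 fun i _ => h.le_one i

theorem integral_prod_le [Fintype ι] [DecidableEq ι] [IsFiniteMeasure μ]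
    (h : DownwardCorrelated μ X p)
    (hX01 : ∀ i ω, X i ω = 0 ∨ X i ω = 1) (hXm : ∀ i, Measurable (X i))
    {t : ℝ} (ht0 : 0 ≤ t) (ht1 : t ≤ 1) :
    ∫ ω, ∏ i, (1 - t * X i ω) ∂μ ≤ ∏ i, (1 - t * p i) := by
  simp_rw [prod_one_sub_mul_eq_sum_powerset]
  rw [integral_finsetSum _ fun J _ => (integrable_prod_one_sub hX01 hXm J).const_mul _]
  refine sum_le_sum fun J _ => ?_
  rw [integral_const_mul, integral_prod_one_sub hX01 hXm J]
  exact mul_le_mul_of_nonneg_left (h J)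
    (mul_nonneg (pow_nonneg ht0 _) (pow_nonneg (sub_nonneg.2 ht1) _))

theorem measureReal_sum_le_mul_rpow_le [Fintype ι] [IsFiniteMeasure μ]
    (h : DownwardCorrelated μ X p) (hX01 : ∀ i ω, X i ω = 0 ∨ X i ω = 1)
    (hXm : ∀ i, Measurable (X i)) {s : ℝ} (hs0 : 0 < s) (hs1 : s ≤ 1) (a : ℝ) :
    μ.real {ω | ∑ i, X i ω ≤ a} * s ^ a ≤ ∏ i, (1 - (1 - s) * p i) := by
  have hsum_nonneg : ∀ ω, 0 ≤ ∑ i, X i ω := fun ω =>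
    sum_nonneg fun i _ => by rcases hX01 i ω with h | h <;> simp [h]
  have hint : Integrable (fun ω => s ^ ∑ i, X i ω) μ := by
    refine Integrable.of_bound (measurable_const.pow (by fun_prop)).aestronglyMeasurable 1
      (ae_of_all _ fun ω => ?_)
    rw [Real.norm_of_nonneg (by positivity)]
    exact Real.rpow_le_one hs0.le hs1 (hsum_nonneg ω)
  calc μ.real {ω | ∑ i, X i ω ≤ a} * s ^ a
      ≤ s ^ a * μ.real {ω | s ^ a ≤ s ^ ∑ i, X i ω} := by
        rw [mul_comm]
        exact mul_le_mul_of_nonneg_left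
          (measureReal_mono fun ω hω => Real.rpow_le_rpow_of_exponent_ge hs0 hs1 hω)
          (by positivity)
    _ ≤ ∫ ω, s ^ ∑ i, X i ω ∂μ :=
        mul_meas_ge_le_integral_of_nonneg (ae_of_all _ fun ω => by positivity) hint _
    _ = ∫ ω, ∏ i, (1 - (1 - s) * X i ω) ∂μ := by
        simp_rw [Real.rpow_sum_eq_prod_one_sub_mul hs0 _ fun i _ => hX01 i _]
    _ ≤ ∏ i, (1 - (1 - s) * p i) := by
        classical
        exact h.integral_prod_le hX01 hXm (by linarith) (by linarith)

theorem measure_sum_le_eq_zero_of_sum_eq_card [Fintype ι] [IsFiniteMeasure μ]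
    (h : DownwardCorrelated μ X p) (hX01 : ∀ i ω, X i ω = 0 ∨ X i ω = 1)
    (hsum : ∑ i, p i = Fintype.card ι) {a : ℝ} (ha : a < Fintype.card ι) :
    μ {ω | ∑ i, X i ω ≤ a} = 0 := by
  have hp1 : ∀ i, p i = 1 := fun i =>
    (sum_eq_sum_iff_of_le fun i _ => h.le_one i).1 (by simpa using hsum) i (mem_univ i)
  have hnull : ∀ i, μ {ω | X i ω = 0} = 0 := fun i => by
    have hi := h {i}
    simp only [mem_singleton, forall_eq, prod_singleton, hp1 i, sub_self] at hi
    exact (measureReal_eq_zero_iff).1 (le_antisymm hi measureReal_nonneg)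
  refine measure_mono_null (fun ω hω => ?_) (measure_iUnion_null hnull)
  by_contra hω'
  simp only [Set.mem_iUnion, Set.mem_ofPred_eq, not_exists] at hω'
  have hall : ∑ i, X i ω = Fintype.card ι := by
    simp [fun i => (hX01 i ω).resolve_left (hω' i)]
  exact ha.not_ge (hall ▸ hω)

theorem measureReal_sum_le_le_of_sum_lt_card [Fintype ι] [IsFiniteMeasure μ]
    (h : DownwardCorrelated μ X p) (hX01 : ∀ i ω, X i ω = 0 ∨ X i ω = 1)
    (hXm : ∀ i, Measurable (X i)) {a : ℝ} (ha0 : 0 < a) (ha : a ≤ ∑ i, p i)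
    (hlt : ∑ i, p i < Fintype.card ι) :
    μ.real {ω | ∑ i, X i ω ≤ a} ≤
      ((Fintype.card ι - ∑ i, p i) / (Fintype.card ι - a)) ^ ((Fintype.card ι : ℝ) - a) *
        ((∑ i, p i) / a) ^ a := by
  set n : ℝ := (Fintype.card ι : ℝ)
  set mu := ∑ i, p i
  set B := (n - mu) / (n - a)
  set s := a / mu * B with hs
  have hmu0 : 0 < mu := ha0.trans_le ha
  have hB0 : 0 < B := div_pos (by linarith) (by linarith)
  have hs0 : 0 < s := by positivity
  have hs1 : s ≤ 1 := mul_le_one₀ (div_le_one_of_le₀ ha hmu0.le) hB0.le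
    (div_le_one_of_le₀ (by linarith) (by linarith))
  have hsum : ∑ i, (1 - (1 - s) * p i) = n * B := by
    have hBn : B * (n - a) = n - mu := div_mul_cancel₀ _ (by linarith)
    have hsmu : s * mu = a * B := by rw [hs]; field_simp
    rw [sum_sub_distrib, ← mul_sum]
    simp only [sum_const, card_univ, nsmul_eq_mul, mul_one]
    linear_combination hsmu - hBn
  have hamgm : ∏ i, (1 - (1 - s) * p i) ≤ B ^ Fintype.card ι := by
    have hz : ∀ i ∈ univ, 0 ≤ 1 - (1 - s) * p i := fun i _ => by nlinarith [h.le_one i]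
    have := Real.prod_le_arith_mean_pow univ _ hz
    rwa [hsum, card_univ, mul_div_cancel_left₀ _ (by linarith : n ≠ 0)] at this
  have hsa : s ^ a = (a / mu) ^ a * B ^ a := Real.mul_rpow (by positivity) hB0.le
  calc μ.real {ω | ∑ i, X i ω ≤ a} = μ.real {ω | ∑ i, X i ω ≤ a} * s ^ a / s ^ a := by
        field_simp
    _ ≤ B ^ n / s ^ a := by
        rw [Real.rpow_natCast]
        gcongr
        exact (h.measureReal_sum_le_mul_rpow_le hX01 hXm hs0 hs1 a).trans hamgm
    _ = B ^ (n - a) * (mu / a) ^ a := by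
        rw [hsa, Real.rpow_sub hB0, Real.div_rpow hmu0.le ha0.le, Real.div_rpow ha0.le hmu0.le]
        field_simp

end DownwardCorrelated

end

theorem neg_corr_chernoff_lower_tail_general
    {Ω : Type*} [MeasurableSpace Ω]
    (μ : Measure Ω) [IsProbabilityMeasure μ]
    (m : ℕ) (X : Fin m → Ω → ℝ)
    (hX01 : ∀ i ω, X i ω = 0 ∨ X i ω = 1)
    (hXmeas : ∀ i, Measurable (X i))
    (p : Fin m → ℝ)
    (hneg : ∀ J : Finset (Fin m),
      (μ {ω | ∀ j ∈ J, X j ω = 0}).toReal ≤ ∏ j ∈ J, (1 - p j))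
    (mu : ℝ) (hmu : mu = ∑ i, p i)
    (a : ℝ) (ha0 : 0 < a) (ha : a ≤ mu) :
    (μ {ω | ∑ i, X i ω ≤ a}).toReal ≤
      (((m : ℝ) - mu) / ((m : ℝ) - a)) ^ ((m : ℝ) - a) * (mu / a) ^ a := by
  have h : DownwardCorrelated μ X p := hneg
  rw [← measureReal_def]
  have hmu_le : mu ≤ m := by simpa [hmu] using h.sum_le_card
  rcases hmu_le.lt_or_eq with hlt | heq
  · simpa [hmu] using h.measureReal_sum_le_le_of_sum_lt_card hX01 hXmeas ha0 (hmu ▸ ha)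
      (by simpa [hmu] using hlt)
  rcases (ha.trans hmu_le).lt_or_eq with ham | rfl
  · rw [(measureReal_eq_zero_iff).2 (h.measure_sum_le_eq_zero_of_sum_eq_card hX01
      (by simpa [hmu] using heq) (by simpa using ham))]
    exact mul_nonneg (Real.rpow_nonneg (div_nonneg (by linarith) (by linarith)) _)
      (Real.rpow_nonneg (div_nonneg (by linarith) ha0.le) _)
  · simp [heq, ha0.ne']

theorem neg_corr_chernoff_lower_tail
    {Ω : Type*} [MeasurableSpace Ω]
    (μ : Measure Ω) [IsProbabilityMeasure μ]
    (m : ℕ) (X : Fin m → Ω → ℝ)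
    (hX01 : ∀ i ω, X i ω = 0 ∨ X i ω = 1)
    (hXmeas : ∀ i, Measurable (X i))
    (p : Fin m → ℝ) (hp : ∀ i, (μ {ω | X i ω = 1}).toReal = p i)
    (hneg : ∀ J : Finset (Fin m),
      (μ {ω | ∀ j ∈ J, X j ω = 0}).toReal ≤ ∏ j ∈ J, (1 - p j))
    (mu : ℝ) (hmu : mu = ∑ i, p i)
    (a : ℝ) (ha0 : 0 < a) (ha : a ≤ mu) :
    (μ {ω | ∑ i, X i ω ≤ a}).toReal ≤
      (((m : ℝ) - mu) / ((m : ℝ) - a)) ^ ((m : ℝ) - a) * (mu / a) ^ a :=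
  neg_corr_chernoff_lower_tail_general μ m X hX01 hXmeas p hneg mu hmu a ha0 ha
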